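/- Let (Ω,A,m) = ⊗_{j=1}^N(Ω_j,A_j,m_j) be a product measure space, ρ a density that factorizes as ρ(x) = ρ₁(x^{(1)}) ρ₂(x^{(2)}) over a product splitting of each factor space. Then the anisotropic pseudo-norm is multiplicative, N_{q,m}[ρ] = N_{q,m₁}[ρ₁] · N_{q,m₂}[ρ₂], and consequently the generalized Rényi entropy S_q^{(2)}[ρ,m] := (1−q_N)⁻¹ log N_{q,m}[ρ] is extensive: S_q^{(2)}[ρ,m] = S_q^{(2)}[ρ₁,m₁] + S_q^{(2)}[ρ₂,m₂]. -/

import Mathlib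

open MeasureTheory ENNReal

/-!
Peeling off the outermost integral, the integrand of `N_q[ρ₁ ⊗ ρ₂]` at `(x₀, y₀)` is, by
induction, the product of the inner functionals of the two sections, raised to `q₀`; since
`(ab)^q = a^q b^q`, Tonelli's theorem for a product integrand `f(x₀) g(y₀)` splits the outer
integral.
-/

/-- The iterated (anisotropic) functional
`N_q[ρ] = ∫_{Ω₁}(⋯(∫_{Ω_N} ρ^{q_N} dm_N)^{q_{N-1}}⋯)^{q₁} dm₁`,
defined recursively: the outermost integral is over the first factor. -/
noncomputable def NQe : (N : ℕ) → (Ω : Fin N → Type) →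
    (inst : ∀ i, MeasurableSpace (Ω i)) →
    (m : ∀ i, @MeasureTheory.Measure (Ω i) (inst i)) → (q : Fin N → ℝ) →
    ((∀ i, Ω i) → ℝ≥0∞) → ℝ≥0∞
  | 0, _, _, _, _, ρ => ρ fun i => i.elim0
  | _ + 1, Ω, inst, m, q, ρ =>
      @MeasureTheory.lintegral (Ω 0) (inst 0) (m 0) fun x0 =>
        (NQe _ (fun i => Ω i.succ) (fun i => inst i.succ) (fun i => m i.succ)
            (fun i => q i.succ) fun xs => ρ (Fin.cons x0 xs)) ^ q 0

lemma NQe_zero {Ω : Fin 0 → Type} [∀ i, MeasurableSpace (Ω i)] (m : ∀ i, Measure (Ω i))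
    (q : Fin 0 → ℝ) (ρ : (∀ i, Ω i) → ℝ≥0∞) :
    NQe 0 Ω (fun _ => inferInstance) m q ρ = ρ fun i => i.elim0 := rfl

lemma NQe_succ {N : ℕ} {Ω : Fin (N + 1) → Type} [∀ i, MeasurableSpace (Ω i)]
    (m : ∀ i, Measure (Ω i)) (q : Fin (N + 1) → ℝ) (ρ : (∀ i, Ω i) → ℝ≥0∞) :
    NQe (N + 1) Ω (fun _ => inferInstance) m q ρ =
      ∫⁻ x₀, NQe N (fun i => Ω i.succ) (fun _ => inferInstance) (fun i => m i.succ)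
        (fun i => q i.succ) (fun xs => ρ (Fin.cons x₀ xs)) ^ q 0 ∂m 0 := rfl

lemma measurable_finCons {N : ℕ} {Ω : Fin (N + 1) → Type*} [∀ i, MeasurableSpace (Ω i)] :
    Measurable fun p : Ω 0 × (∀ i : Fin N, Ω i.succ) => (Fin.cons p.1 p.2 : ∀ i, Ω i) := by
  refine measurable_pi_lambda _ fun i => ?_
  cases i using Fin.cases with
  | zero => exact measurable_fst
  | succ j => exact (measurable_pi_apply j).comp measurable_snd

lemma measurable_NQe_section {α : Type} [MeasurableSpace α] {N : ℕ} {Ω : Fin N → Type}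
    [∀ i, MeasurableSpace (Ω i)] (m : ∀ i, Measure (Ω i)) [∀ i, SFinite (m i)]
    (q : Fin N → ℝ) {ρ : α × (∀ i, Ω i) → ℝ≥0∞} (hρ : Measurable ρ) :
    Measurable fun a => NQe N Ω (fun _ => inferInstance) m q fun xs => ρ (a, xs) := by
  induction N generalizing α with
  | zero => exact hρ.comp (measurable_id.prodMk measurable_const)
  | succ N ih =>
    simp only [NQe_succ]
    have hcons : Measurable fun p : (α × Ω 0) × (∀ i : Fin N, Ω i.succ) =>
        (p.1.1, (Fin.cons p.1.2 p.2 : ∀ i, Ω i)) :=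
      measurable_fst.fst.prodMk
        (measurable_finCons.comp (measurable_fst.snd.prodMk measurable_snd))
    exact Measurable.lintegral_prod_right
      ((ih (fun i => m i.succ) (fun i => q i.succ) (hρ.comp hcons)).pow_const (q 0))

lemma finCons_fst {N : ℕ} {α β : Fin (N + 1) → Type*} (p : α 0 × β 0)
    (xs : ∀ i : Fin N, α i.succ × β i.succ) :
    (fun i => (Fin.cons (α := fun i => α i × β i) p xs i).1) =
      Fin.cons p.1 fun i => (xs i).1 := by
  funext i; cases i using Fin.cases <;> rfl

lemma finCons_snd {N : ℕ} {α β : Fin (N + 1) → Type*} (p : α 0 × β 0)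
    (xs : ∀ i : Fin N, α i.succ × β i.succ) :
    (fun i => (Fin.cons (α := fun i => α i × β i) p xs i).2) =
      Fin.cons p.2 fun i => (xs i).2 := by
  funext i; cases i using Fin.cases <;> rfl

lemma measurable_NQe_finCons {N : ℕ} {Ω : Fin (N + 1) → Type} [∀ i, MeasurableSpace (Ω i)]
    (m : ∀ i, Measure (Ω i)) [∀ i, SFinite (m i)] (q : Fin (N + 1) → ℝ)
    {ρ : (∀ i, Ω i) → ℝ≥0∞} (hρ : Measurable ρ) :
    Measurable fun x₀ : Ω 0 => NQe N (fun i => Ω i.succ) (fun _ => inferInstance)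
      (fun i => m i.succ) (fun i => q i.succ) fun xs => ρ (Fin.cons x₀ xs) :=
  measurable_NQe_section (fun i => m i.succ) (fun i => q i.succ) (hρ.comp measurable_finCons)

theorem NQe_prod_mul {N : ℕ} {Ω₁ Ω₂ : Fin N → Type} [∀ i, MeasurableSpace (Ω₁ i)]
    [∀ i, MeasurableSpace (Ω₂ i)] (m₁ : ∀ i, Measure (Ω₁ i)) (m₂ : ∀ i, Measure (Ω₂ i))
    [∀ i, SFinite (m₁ i)] [∀ i, SFinite (m₂ i)] {q : Fin N → ℝ} (hq : ∀ k, 0 ≤ q k)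
    {ρ₁ : (∀ i, Ω₁ i) → ℝ≥0∞} {ρ₂ : (∀ i, Ω₂ i) → ℝ≥0∞}
    (hρ₁ : Measurable ρ₁) (hρ₂ : Measurable ρ₂) :
    NQe N (fun i => Ω₁ i × Ω₂ i) (fun _ => inferInstance) (fun i => (m₁ i).prod (m₂ i)) q
        (fun x => ρ₁ (fun i => (x i).1) * ρ₂ (fun i => (x i).2)) =
      NQe N Ω₁ (fun _ => inferInstance) m₁ q ρ₁ * NQe N Ω₂ (fun _ => inferInstance) m₂ q ρ₂ := by
  induction N with
  | zero =>
    simp only [NQe_zero]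
    congr <;> exact funext fun i => i.elim0
  | succ N ih =>
    have hρ₁_cons : ∀ x₀, Measurable fun xs => ρ₁ (Fin.cons x₀ xs) := fun x₀ =>
      hρ₁.comp (measurable_finCons.comp measurable_prodMk_left)
    have hρ₂_cons : ∀ x₀, Measurable fun xs => ρ₂ (Fin.cons x₀ xs) := fun x₀ =>
      hρ₂.comp (measurable_finCons.comp measurable_prodMk_left)
    simp only [NQe_succ, finCons_fst, finCons_snd]
    simp only [ih (fun i => m₁ i.succ) (fun i => m₂ i.succ) (fun i => hq i.succ) (hρ₁_cons _)
      (hρ₂_cons _), ENNReal.mul_rpow_of_nonneg _ _ (hq 0)]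
    exact lintegral_prod_mul
      ((measurable_NQe_finCons m₁ q hρ₁).pow_const (q 0)).aemeasurable
      ((measurable_NQe_finCons m₂ q hρ₂).pow_const (q 0)).aemeasurable

theorem stmt19_general (N : ℕ) (Ω₁ Ω₂ : Fin (N + 1) → Type)
    [i₁ : ∀ i, MeasurableSpace (Ω₁ i)] [i₂ : ∀ i, MeasurableSpace (Ω₂ i)]
    (m₁ : ∀ i, Measure (Ω₁ i)) (m₂ : ∀ i, Measure (Ω₂ i))
    [∀ i, SigmaFinite (m₁ i)] [∀ i, SigmaFinite (m₂ i)]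
    (q : Fin (N + 1) → ℝ) (hq : ∀ k, 0 < q k ∧ q k ≤ 1)
    (ρ₁ : (∀ i, Ω₁ i) → ℝ≥0∞) (ρ₂ : (∀ i, Ω₂ i) → ℝ≥0∞)
    (hρ₁ : Measurable ρ₁) (hρ₂ : Measurable ρ₂)
    (h₁0 : NQe (N + 1) Ω₁ (fun i => inferInstance) m₁ q ρ₁ ≠ 0)
    (h₁t : NQe (N + 1) Ω₁ (fun i => inferInstance) m₁ q ρ₁ ≠ ⊤)
    (h₂0 : NQe (N + 1) Ω₂ (fun i => inferInstance) m₂ q ρ₂ ≠ 0)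
    (h₂t : NQe (N + 1) Ω₂ (fun i => inferInstance) m₂ q ρ₂ ≠ ⊤) :
    NQe (N + 1) (fun i => Ω₁ i × Ω₂ i) (fun i => inferInstance)
        (fun i => (m₁ i).prod (m₂ i)) q
        (fun x => ρ₁ (fun i => (x i).1) * ρ₂ (fun i => (x i).2)) =
      NQe (N + 1) Ω₁ (fun i => inferInstance) m₁ q ρ₁ *
        NQe (N + 1) Ω₂ (fun i => inferInstance) m₂ q ρ₂ ∧
    (1 - q (Fin.last N))⁻¹ *
        Real.log ((NQe (N + 1) (fun i => Ω₁ i × Ω₂ i) (fun i => inferInstance)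
          (fun i => (m₁ i).prod (m₂ i)) q
          (fun x => ρ₁ (fun i => (x i).1) * ρ₂ (fun i => (x i).2))).toReal) =
      (1 - q (Fin.last N))⁻¹ *
          Real.log ((NQe (N + 1) Ω₁ (fun i => inferInstance) m₁ q ρ₁).toReal) +
        (1 - q (Fin.last N))⁻¹ *
          Real.log ((NQe (N + 1) Ω₂ (fun i => inferInstance) m₂ q ρ₂).toReal) := by
  have hmul := NQe_prod_mul m₁ m₂ (fun k => (hq k).1.le) hρ₁ hρ₂
  refine ⟨hmul, ?_⟩
  rw [hmul, ENNReal.toReal_mul, Real.log_mul (ENNReal.toReal_ne_zero.mpr ⟨h₁0, h₁t⟩)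
    (ENNReal.toReal_ne_zero.mpr ⟨h₂0, h₂t⟩), mul_add]

/-- Multiplicativity of the anisotropic pseudo-norm over a product splitting of each
factor space, and the resulting extensivity of the generalized Rényi entropy
`S_q^{(2)}[ρ] = (1-q_N)⁻¹ log N_q[ρ]` for factorized densities. -/
theorem stmt19 (N : ℕ) (Ω₁ Ω₂ : Fin (N + 1) → Type)
    [i₁ : ∀ i, MeasurableSpace (Ω₁ i)] [i₂ : ∀ i, MeasurableSpace (Ω₂ i)]
    (m₁ : ∀ i, Measure (Ω₁ i)) (m₂ : ∀ i, Measure (Ω₂ i))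
    [∀ i, SigmaFinite (m₁ i)] [∀ i, SigmaFinite (m₂ i)]
    (q : Fin (N + 1) → ℝ) (hq : ∀ k, 0 < q k ∧ q k ≤ 1)
    (ρ₁ : (∀ i, Ω₁ i) → ℝ≥0∞) (ρ₂ : (∀ i, Ω₂ i) → ℝ≥0∞)
    (hρ₁ : Measurable ρ₁) (hρ₂ : Measurable ρ₂)
    (hρ₁_norm : ∫⁻ x, ρ₁ x ∂(Measure.pi m₁) = 1)
    (hρ₂_norm : ∫⁻ x, ρ₂ x ∂(Measure.pi m₂) = 1)
    (h₁0 : NQe (N + 1) Ω₁ (fun i => inferInstance) m₁ q ρ₁ ≠ 0)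
    (h₁t : NQe (N + 1) Ω₁ (fun i => inferInstance) m₁ q ρ₁ ≠ ⊤)
    (h₂0 : NQe (N + 1) Ω₂ (fun i => inferInstance) m₂ q ρ₂ ≠ 0)
    (h₂t : NQe (N + 1) Ω₂ (fun i => inferInstance) m₂ q ρ₂ ≠ ⊤) :
    NQe (N + 1) (fun i => Ω₁ i × Ω₂ i) (fun i => inferInstance)
        (fun i => (m₁ i).prod (m₂ i)) q
        (fun x => ρ₁ (fun i => (x i).1) * ρ₂ (fun i => (x i).2)) =
      NQe (N + 1) Ω₁ (fun i => inferInstance) m₁ q ρ₁ *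
        NQe (N + 1) Ω₂ (fun i => inferInstance) m₂ q ρ₂ ∧
    (1 - q (Fin.last N))⁻¹ *
        Real.log ((NQe (N + 1) (fun i => Ω₁ i × Ω₂ i) (fun i => inferInstance)
          (fun i => (m₁ i).prod (m₂ i)) q
          (fun x => ρ₁ (fun i => (x i).1) * ρ₂ (fun i => (x i).2))).toReal) =
      (1 - q (Fin.last N))⁻¹ *
          Real.log ((NQe (N + 1) Ω₁ (fun i => inferInstance) m₁ q ρ₁).toReal) +
        (1 - q (Fin.last N))⁻¹ *
          Real.log ((NQe (N + 1) Ω₂ (fun i => inferInstance) m₂ q ρ₂).toReal) :=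
  stmt19_general N Ω₁ Ω₂ (i₁ := i₁) (i₂ := i₂) m₁ m₂ q hq ρ₁ ρ₂ hρ₁ hρ₂ h₁0 h₁t h₂0 h₂t
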